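/- Let R be an irreducible reduced root system with simple roots Δ = {α_1,...,α_n} and highest root θ = ∑_{i=1}^{n} n_i·α_i. Suppose u is a Weyl group element with u({−θ} ∪ Δ) = {−θ} ∪ Δ and u(α_r) = −θ for some r with n_r = 1. If u(α_i) = α_j for indices i, j, then n_i = n_j. -/
import Mathlib


open scoped RealInnerProductSpace

/-- Data of a reduced crystallographic root system in a real inner product
space, together with a choice of positive roots and simple roots. -/
structure RootSystemData (V : Type*) [NormedAddCommGroup V] [InnerProductSpace ℝ V] where
  /-- the set of roots -/
  R : Finset V
  /-- the positive roots -/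
  Rplus : Finset V
  /-- the simple roots -/
  Δ : Finset V
  zero_not_mem : (0 : V) ∉ R
  delta_subset : Δ ⊆ Rplus
  plus_subset : Rplus ⊆ R
  neg_mem : ∀ α ∈ R, -α ∈ R
  plus_or_neg : ∀ α ∈ R, α ∈ Rplus ∨ -α ∈ Rplus
  plus_not_neg : ∀ α ∈ Rplus, -α ∉ Rplus
  reduced : ∀ α ∈ R, ∀ c : ℝ, c • α ∈ R → c = 1 ∨ c = -1
  pos_comb : ∀ α ∈ Rplus, ∃ m : V → ℕ, α = ∑ β ∈ Δ, (m β : ℝ) • β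
  crystallographic : ∀ α ∈ R, ∀ β ∈ R, ∃ z : ℤ, 2 * ⟪α, β⟫ / ⟪β, β⟫ = (z : ℝ)
  reflect_mem : ∀ α ∈ R, ∀ β ∈ R, β - (2 * ⟪β, α⟫ / ⟪α, α⟫) • α ∈ R

/-- The set of linear automorphisms acting as orthogonal reflections in the
vectors of `S`. -/
def reflections {V : Type*} [NormedAddCommGroup V] [InnerProductSpace ℝ V]
    (S : Set V) : Set (V ≃ₗ[ℝ] V) :=
  {s | ∃ α ∈ S, ∀ v : V, s v = v - (2 * ⟪v, α⟫ / ⟪α, α⟫) • α}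

/-- The Weyl group of a root system: the subgroup of linear automorphisms
generated by the reflections in the roots. -/
def weylGroup {V : Type*} [NormedAddCommGroup V] [InnerProductSpace ℝ V]
    (P : RootSystemData V) : Subgroup (V ≃ₗ[ℝ] V) :=
  Subgroup.closure (reflections (P.R : Set V))

/-- If u is a Weyl group element permuting {−θ} ∪ Δ with u(αᵣ) = −θ, nᵣ = 1,
and u(αᵢ) = αⱼ, then nᵢ = nⱼ, where θ = ∑ nᵢαᵢ is the highest root. -/
theorem stmt14 {V : Type*} [NormedAddCommGroup V] [InnerProductSpace ℝ V]
    (P : RootSystemData V) {p : ℕ}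
    (α : Fin p → V) (hli : LinearIndependent ℝ α)
    (hα : ∀ i, α i ∈ P.Δ) (hαsurj : ∀ β ∈ P.Δ, ∃ i, α i = β)
    (θ : V) (hθ : θ ∈ P.R) (n : Fin p → ℕ)
    (hθn : θ = ∑ i, (n i : ℝ) • α i)
    (hθmax : ∀ β ∈ P.R, ∃ m : V → ℕ, θ - β = ∑ a ∈ P.Δ, (m a : ℝ) • a)
    (u : V ≃ₗ[ℝ] V) (huW : u ∈ weylGroup P)
    (hperm : ⇑u '' (insert (-θ) (Set.range α)) = insert (-θ) (Set.range α))
    (r : Fin p) (hr : u (α r) = -θ) (hnr : n r = 1)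
    (i j : Fin p) (hij : u (α i) = α j) :
    n i = n j := by
  classical
  have hainj : Function.Injective α := hli.injective
  have hli' : ∀ g : Fin p → ℝ, ∑ k, g k • α k = 0 → ∀ k, g k = 0 :=
    fun g hg => Fintype.linearIndependent_iff.mp hli g hg
  -- -θ is not in the range of α
  have hnotin : -θ ∉ Set.range α := by
    rintro ⟨m, hm⟩
    have hzero : ∑ k, ((n k : ℝ) + if k = m then 1 else 0) • α k = 0 := by
      have : ∑ k, ((n k : ℝ) + if k = m then 1 else 0) • α k
          = ∑ k, (n k : ℝ) • α k + ∑ k, (if k = m then (1:ℝ) else 0) • α k := by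
        rw [← Finset.sum_add_distrib]
        exact Finset.sum_congr rfl fun k _ => by rw [add_smul]
      rw [this, ← hθn]
      have : ∑ k, (if k = m then (1:ℝ) else 0) • α k = α m := by
        rw [Finset.sum_eq_single m]
        · simp
        · intro b _ hb; simp [hb]
        · intro h; exact absurd (Finset.mem_univ m) h
      rw [this, hm]
      simp
    have h1 := hli' _ hzero m
    norm_num at h1
    have h2 : (0:ℝ) ≤ (n m : ℝ) := Nat.cast_nonneg _
    linarith
  have hmemS : ∀ v ∈ insert (-θ) (Set.range α), u v ∈ insert (-θ) (Set.range α) := by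
    intro v hv
    rw [← hperm]
    exact ⟨v, hv, rfl⟩
  -- for k ≠ r, u (α k) is in range α
  have hrange : ∀ k : Fin p, k ≠ r → ∃ m, α m = u (α k) := by
    intro k hk
    have := hmemS (α k) (Set.mem_insert_iff.mpr (Or.inr ⟨k, rfl⟩))
    rcases Set.mem_insert_iff.mp this with h | h
    · exfalso
      have : α k = α r := u.injective (by rw [hr, h])
      exact hk (hainj this)
    · rcases h with ⟨m, hm⟩; exact ⟨m, hm⟩
  -- u (-θ) is in range α
  have hs : ∃ s, α s = u (-θ) := by
    have := hmemS (-θ) (Set.mem_insert _ _)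
    rcases Set.mem_insert_iff.mp this with h | h
    · exfalso
      have : α r = -θ := u.injective (by rw [hr, h])
      exact hnotin ⟨r, this⟩
    · rcases h with ⟨m, hm⟩; exact ⟨m, hm⟩
  have hchoice : ∀ k : Fin p, ∃ m, α m = if k = r then u (-θ) else u (α k) := by
    intro k
    by_cases hk : k = r
    · simp only [hk, if_pos rfl]; exact hs
    · simp only [if_neg hk]; exact hrange k hk
  choose σ hσ using hchoice
  -- key identity : ∑ n k • α (σ k) = θ
  have hkey : ∑ k, (n k : ℝ) • α (σ k) = θ := by
    have hterm : ∀ k : Fin p, (n k : ℝ) • α (σ k)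
        = (n k : ℝ) • u (α k) + (if k = r then u (-θ) + θ else 0) := by
      intro k
      by_cases hk : k = r
      · subst hk
        rw [hσ, if_pos rfl, if_pos rfl, hr, hnr]
        simp
      · rw [hσ, if_neg hk, if_neg hk, add_zero]
    calc ∑ k, (n k : ℝ) • α (σ k)
        = ∑ k, ((n k : ℝ) • u (α k) + (if k = r then u (-θ) + θ else 0)) :=
          Finset.sum_congr rfl fun k _ => hterm k
      _ = ∑ k, (n k : ℝ) • u (α k) + (u (-θ) + θ) := by
          rw [Finset.sum_add_distrib, Finset.sum_ite_eq' Finset.univ r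
            (fun _ => u (-θ) + θ), if_pos (Finset.mem_univ r)]
      _ = u θ + (u (-θ) + θ) := by
          congr 1
          rw [hθn, map_sum]
          exact Finset.sum_congr rfl fun k _ => by rw [map_smul]
      _ = θ := by rw [map_neg]; abel
  -- σ is injective
  have hσinj : Function.Injective σ := by
    intro k k' hkk
    have h1 := hσ k
    have h2 := hσ k'
    rw [hkk] at h1
    by_cases hk : k = r <;> by_cases hk' : k' = r
    · rw [hk, hk']
    · rw [if_pos hk] at h1; rw [if_neg hk'] at h2
      exfalso
      have : -θ = α k' := u.injective (by rw [← h1, h2])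
      exact hnotin ⟨k', this.symm⟩
    · rw [if_neg hk] at h1; rw [if_pos hk'] at h2
      exfalso
      have : -θ = α k := u.injective (by rw [← h2, h1])
      exact hnotin ⟨k, this.symm⟩
    · rw [if_neg hk] at h1; rw [if_neg hk'] at h2
      exact hainj (u.injective (by rw [← h1, h2]))
  have hσbij : Function.Bijective σ := Finite.injective_iff_bijective.mp hσinj
  let e : Fin p ≃ Fin p := Equiv.ofBijective σ hσbij
  have hsum2 : ∑ m, (n (e.symm m) : ℝ) • α m = ∑ m, (n m : ℝ) • α m := by
    rw [← hθn, ← hkey]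
    refine (Fintype.sum_equiv e (fun k => (n k : ℝ) • α (σ k))
      (fun m => (n (e.symm m) : ℝ) • α m) fun k => ?_).symm
    show (n k : ℝ) • α (σ k) = (n (e.symm (σ k)) : ℝ) • α (σ k)
    have he : σ k = e k := rfl
    rw [he, Equiv.symm_apply_apply]
  have hco : ∀ m, (n (e.symm m) : ℝ) = (n m : ℝ) := by
    intro m
    have hz : ∑ k, ((n (e.symm k) : ℝ) - (n k : ℝ)) • α k = 0 := by
      have : ∑ k, ((n (e.symm k) : ℝ) - (n k : ℝ)) • α k
          = ∑ k, (n (e.symm k) : ℝ) • α k - ∑ k, (n k : ℝ) • α k := by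
        rw [← Finset.sum_sub_distrib]
        exact Finset.sum_congr rfl fun k _ => by rw [sub_smul]
      rw [this, hsum2, sub_self]
    have := hli' _ hz m
    linarith [this]
  -- i ≠ r
  have hir : i ≠ r := by
    intro h
    rw [h, hr] at hij
    exact hnotin ⟨j, hij.symm⟩
  have hji : j = σ i := by
    apply hainj
    rw [← hij, hσ, if_neg hir]
  have := hco (σ i)
  have hei : e.symm (σ i) = i := by
    have : e i = σ i := rfl
    rw [← this, Equiv.symm_apply_apply]
  rw [hei] at this
  rw [hji]
  exact_mod_cast this
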